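/- There exist a nonzero vector X ∈ ℝ² and a point y on the indicatrix {y : y₁⁴+3y₁²y₂²+y₂⁴ = 1} such that E_X(y) < ½F(X)², where F(y) = (y₁⁴+3y₁²y₂²+y₂⁴)^(1/4). Specifically, X = (1,0) and y = (5^(−1/4), 5^(−1/4)) satisfy E_X(y) = 1/√5 < ½ = ½F(X)². -/
import Mathlib

noncomputable def F (y₁ y₂ : ℝ) : ℝ := (y₁^4 + 3*y₁^2*y₂^2 + y₂^4) ^ ((1:ℝ)/4)

noncomputable def E (X₁ X₂ y₁ y₂ : ℝ) : ℝ :=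
  ((2*X₁^2 + 3*X₂^2)*y₁^6 + (9*X₁^2 + 6*X₂^2)*y₁^4*y₂^2 + 10*X₁*X₂*y₁^3*y₂^3
    + (6*X₁^2 + 9*X₂^2)*y₁^2*y₂^4 + (3*X₁^2 + 2*X₂^2)*y₂^6)
  / (4 * (y₁^4 + 3*y₁^2*y₂^2 + y₂^4) ^ ((3:ℝ)/2))

lemma F10 : F 1 0 = 1 := by
  simp [F]

lemma key : E 1 0 ((5:ℝ) ^ (-(1:ℝ)/4)) ((5:ℝ) ^ (-(1:ℝ)/4)) = 1 / Real.sqrt 5 := by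
  set t : ℝ := (5:ℝ) ^ (-(1:ℝ)/4) with ht
  have h5 : (0:ℝ) < 5 := by norm_num
  have ht4 : t^4 = 1/5 := by
    rw [ht, ← Real.rpow_natCast ((5:ℝ) ^ (-(1:ℝ)/4)) 4, ← Real.rpow_mul h5.le]
    norm_num
  have ht2 : t^2 = 1 / Real.sqrt 5 := by
    rw [ht, ← Real.rpow_natCast ((5:ℝ) ^ (-(1:ℝ)/4)) 2, ← Real.rpow_mul h5.le,
      Real.sqrt_eq_rpow, one_div, ← Real.rpow_neg h5.le]
    norm_num
  have hsum : t^4 + 3*t^2*t^2 + t^4 = 1 := by nlinarith [ht4]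
  have ht6 : t^6 = (1/5) * t^2 := by nlinarith [ht4]
  simp only [E]
  rw [show t^4 + 3*t^2*t^2 + t^4 = 1 from hsum, Real.one_rpow]
  rw [show (2*(1:ℝ)^2 + 3*0^2)*t^6 + (9*1^2 + 6*0^2)*t^4*t^2 + 10*1*0*t^3*t^3
    + (6*1^2 + 9*0^2)*t^2*t^4 + (3*1^2 + 2*0^2)*t^6 = 20 * t^6 by ring]
  rw [ht6, ht2]; ring

theorem counterexample_to_Matsumoto :
    (∃ X₁ X₂ y₁ y₂ : ℝ, (X₁, X₂) ≠ (0, 0) ∧ y₁^4 + 3*y₁^2*y₂^2 + y₂^4 = 1 ∧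
      E X₁ X₂ y₁ y₂ < (1/2) * (F X₁ X₂)^2) ∧
    E 1 0 ((5:ℝ) ^ (-(1:ℝ)/4)) ((5:ℝ) ^ (-(1:ℝ)/4)) = 1 / Real.sqrt 5 ∧
    (1 / Real.sqrt 5 : ℝ) < 1/2 ∧ (1/2 : ℝ) = (1/2) * (F 1 0)^2 := by
  have hlt : (1 / Real.sqrt 5 : ℝ) < 1/2 := by
    rw [div_lt_div_iff₀ (by positivity) (by norm_num)]
    nlinarith [Real.sq_sqrt (by norm_num : (5:ℝ) ≥ 0), Real.sqrt_nonneg (5:ℝ)]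
  have h5 : (0:ℝ) < 5 := by norm_num
  have ht4 : ((5:ℝ) ^ (-(1:ℝ)/4))^4 = 1/5 := by
    rw [← Real.rpow_natCast ((5:ℝ) ^ (-(1:ℝ)/4)) 4, ← Real.rpow_mul h5.le]
    norm_num
  refine ⟨⟨1, 0, (5:ℝ) ^ (-(1:ℝ)/4), (5:ℝ) ^ (-(1:ℝ)/4), by simp, by nlinarith [ht4], ?_⟩,
    key, hlt, by rw [F10]; norm_num⟩
  rw [key, F10]; simpa using hlt
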